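/- arXiv:0812.0899 — 5 statements merged into one kernel-verified Lean document; each statement's English description precedes it below -/
import Mathlib

section
/- Let M be the 2×2 real matrix with rows (1, pα) and (qβ, 1 + pα·qβ) where p, q ∈ ℕ are positive and α, β > 0. Let κ = min(pα, qβ) and λ = √(1 + κ²). Then for every w = (u,v) with uv > 0, ‖M·w‖ ≥ λ·‖w‖. -/
/-! The `u²` and `v²` coefficients of `‖M w‖²` are `1 + (qβ)²` and at least `1 + (pα)²`, each
at least `1 + κ²`; all remaining terms are nonnegative multiples of `uv` or `v²`. -/

theorem one_add_min_sq_mul_le_shear {a b : ℝ} (ha : 0 ≤ a) (hb : 0 ≤ b) {u v : ℝ}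
    (huv : 0 ≤ u * v) :
    (1 + min a b ^ 2) * (u ^ 2 + v ^ 2) ≤ (u + a * v) ^ 2 + (b * u + (1 + a * b) * v) ^ 2 := by
  have hmin : 0 ≤ min a b := le_min ha hb
  have hmin_a : min a b ^ 2 ≤ a ^ 2 := pow_le_pow_left₀ hmin (min_le_left a b) 2
  have hmin_b : min a b ^ 2 ≤ b ^ 2 := pow_le_pow_left₀ hmin (min_le_right a b) 2
  calc (1 + min a b ^ 2) * (u ^ 2 + v ^ 2)
      ≤ (1 + b ^ 2) * u ^ 2 + (1 + a ^ 2) * v ^ 2 := by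
        nlinarith [sq_nonneg u, sq_nonneg v]
    _ ≤ (1 + b ^ 2) * u ^ 2 + (1 + a ^ 2) * v ^ 2
          + 2 * (a + b + a * b ^ 2) * (u * v) + (2 * a * b + a ^ 2 * b ^ 2) * v ^ 2 := by
        have : 0 ≤ a + b + a * b ^ 2 := by positivity
        have : 0 ≤ 2 * a * b + a ^ 2 * b ^ 2 := by positivity
        nlinarith [sq_nonneg v]
    _ = (u + a * v) ^ 2 + (b * u + (1 + a * b) * v) ^ 2 := by ring

theorem return_map_expansion_general (p q : ℕ) (α β : ℝ)
    (hα : 0 < α) (hβ : 0 < β) (u v : ℝ) (hw : u * v > 0) :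
    Real.sqrt
        ((Matrix.mulVec !![1, (p : ℝ) * α; (q : ℝ) * β, 1 + (p : ℝ) * α * ((q : ℝ) * β)]
            ![u, v] 0) ^ 2 +
          (Matrix.mulVec !![1, (p : ℝ) * α; (q : ℝ) * β, 1 + (p : ℝ) * α * ((q : ℝ) * β)]
            ![u, v] 1) ^ 2) ≥
      Real.sqrt (1 + min ((p : ℝ) * α) ((q : ℝ) * β) ^ 2) * Real.sqrt (u ^ 2 + v ^ 2) := by
  rw [ge_iff_le, ← Real.sqrt_mul (by positivity)]
  apply Real.sqrt_le_sqrt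
  simp only [Matrix.mulVec, dotProduct, Fin.sum_univ_two, Matrix.of_apply, Matrix.cons_val',
    Matrix.cons_val_zero, Matrix.cons_val_one, Matrix.empty_val', Matrix.cons_val_fin_one,
    one_mul]
  exact one_add_min_sq_mul_le_shear (by positivity) (by positivity) hw.le

/-- Uniform expansion of the return-map derivative:
`M = (1, pα; qβ, 1 + pα·qβ)` expands Euclidean norm on the cone `{uv > 0}`
by at least `λ = √(1 + κ²)`, where `κ = min(pα, qβ)`. -/
theorem return_map_expansion (p q : ℕ) (hp : 0 < p) (hq : 0 < q) (α β : ℝ)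
    (hα : 0 < α) (hβ : 0 < β) (u v : ℝ) (hw : u * v > 0) :
    Real.sqrt
        ((Matrix.mulVec !![1, (p : ℝ) * α; (q : ℝ) * β, 1 + (p : ℝ) * α * ((q : ℝ) * β)]
            ![u, v] 0) ^ 2 +
          (Matrix.mulVec !![1, (p : ℝ) * α; (q : ℝ) * β, 1 + (p : ℝ) * α * ((q : ℝ) * β)]
            ![u, v] 1) ^ 2) ≥
      Real.sqrt (1 + min ((p : ℝ) * α) ((q : ℝ) * β) ^ 2) * Real.sqrt (u ^ 2 + v ^ 2) :=
  return_map_expansion_general p q α β hα hβ u v hw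
end

section
/- Let H = G ∘ F be a composition of two maps on a space X, let P, Q ⊆ X with G = id on the complement of Q intersected with the relevant orbit, and suppose z satisfies: Fⁿ(z) ∉ Q for 0 < n < p and F^p(z) ∈ Q, and G acts on the subsequent points with Gⁿ(F^p(z))-images staying out of P for 0 < n < q. Then H^{p+q-1}(z) = G^q(F^p(z)). -/
/-! Before reaching `Q` the orbit of `z` under `H = G ∘ F` only sees `F`, since `G` fixes
every point outside `Q`; after the step into `Q` it only sees `G`, since `F` fixes every point
outside `P`. The step `F^[p-1] z ↦ G (F^[p] z)` joins the two stretches, which is why the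
exponent is `p + q - 1` rather than `p + q`. -/

namespace Function

variable {α : Type*} {f g : α → α} {x : α} {k : ℕ}

theorem iterate_comp_apply_eq_iterate_left (h : ∀ n < k, g (f^[n] x) = f^[n] x) :
    (f ∘ g)^[k] x = f^[k] x := by
  induction k with
  | zero => rfl
  | succ k ih =>
    rw [iterate_succ_apply', ih fun n hn => h n (by omega), comp_apply, h k k.lt_succ_self,
      iterate_succ_apply']

theorem iterate_comp_apply_eq_iterate_right
    (h : ∀ n, 0 < n → n ≤ k → f (g^[n] x) = g^[n] x) :
    (f ∘ g)^[k] x = g^[k] x := by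
  induction k with
  | zero => rfl
  | succ k ih =>
    rw [iterate_succ_apply', ih fun n hn hnk => h n hn (by omega), comp_apply,
      ← iterate_succ_apply' g, h (k + 1) k.succ_pos le_rfl]

end Function

open Function in
theorem first_return_formula_general {X : Type*} (F G : X → X)
    (P Q : Set X) (hGid : ∀ w, w ∉ Q → G w = w) (hFid : ∀ w, w ∉ P → F w = w)
    (z : X) (p q : ℕ) (hp : 1 ≤ p) (hq : 1 ≤ q)
    (hFout : ∀ n, 0 < n → n < p → F^[n] z ∉ Q)
    (hGout : ∀ n, 0 < n → n < q → G^[n] (F^[p] z) ∉ P) :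
    (G ∘ F)^[p + q - 1] z = G^[q] (F^[p] z) := by
  have hF : (G ∘ F)^[p - 1] z = F^[p - 1] z :=
    iterate_comp_apply_eq_iterate_right fun n hn hnp => hGid _ (hFout n hn (by omega))
  have hG : (G ∘ F)^[q - 1] (G (F^[p] z)) = G^[q - 1] (G (F^[p] z)) :=
    iterate_comp_apply_eq_iterate_left fun n hn => by
      rw [← iterate_succ_apply]
      exact hFid _ (hGout (n + 1) n.succ_pos (by omega))
  calc (G ∘ F)^[p + q - 1] z = (G ∘ F)^[q - 1] ((G ∘ F) ((G ∘ F)^[p - 1] z)) := by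
        rw [← iterate_succ_apply, ← iterate_add_apply]
        congr 1
        omega
    _ = (G ∘ F)^[q - 1] (G (F^[p] z)) := by
        rw [hF, comp_apply, ← iterate_succ_apply' F, Nat.succ_eq_add_one, Nat.sub_add_cancel hp]
    _ = G^[q] (F^[p] z) := by
        rw [hG, ← iterate_succ_apply, Nat.succ_eq_add_one, Nat.sub_add_cancel hq]

/-- First-return structure of the linked twist map `H = G ∘ F`:
if the first `p` iterates of `F` stay out of `Q` (where `G` is the identity)
until `F^p(z) ∈ Q`, and the subsequent `G`-iterates stay out of `P` (where `F`
is the identity) until the `q`-th, then `H^{p+q-1}(z) = G^q(F^p(z))`. -/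
theorem first_return_formula {X : Type*} (F G : X → X)
    (hFbij : Function.Bijective F) (hGbij : Function.Bijective G)
    (P Q : Set X) (hGid : ∀ w, w ∉ Q → G w = w) (hFid : ∀ w, w ∉ P → F w = w)
    (z : X) (p q : ℕ) (hp : 1 ≤ p) (hq : 1 ≤ q)
    (hFout : ∀ n, 0 < n → n < p → F^[n] z ∉ Q) (hFin : F^[p] z ∈ Q)
    (hGout : ∀ n, 0 < n → n < q → G^[n] (F^[p] z) ∉ P) :
    (G ∘ F)^[p + q - 1] z = G^[q] (F^[p] z) :=
  first_return_formula_general F G P Q hGid hFid z p q hp hq hFout hGout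
end

section
/- Let C = {(u,v) ∈ ℝ² : uv > 0} and C̃ = {(u,v) : uv < 0}. For M = (1, α; β, 1+αβ) with α, β ≥ 0, with inverse M⁻¹ = (1+αβ, −α; −β, 1): if α, β ≥ 0 and (u,v) ∈ C̃ then M⁻¹(u,v) ∈ closure(C̃) \ {0}, and if α, β > 0 then M⁻¹(u,v) ∈ C̃. -/
/-- Cone invariance for the inverse map: `M⁻¹ = (1+αβ, −α; −β, 1)` maps the
second/fourth-quadrant cone `C̃ = {uv < 0}` into its closure minus the origin
when `α, β ≥ 0`, and into `C̃` itself when `α, β > 0`. -/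
theorem inverse_cone_invariance (α β u v : ℝ) (hα : 0 ≤ α) (hβ : 0 ≤ β)
    (hw : u * v < 0) :
    ((Matrix.mulVec !![1 + α * β, -α; -β, 1] ![u, v] 0) *
        (Matrix.mulVec !![1 + α * β, -α; -β, 1] ![u, v] 1) ≤ 0 ∧
      Matrix.mulVec !![1 + α * β, -α; -β, 1] ![u, v] ≠ 0) ∧
    (0 < α → 0 < β →
      (Matrix.mulVec !![1 + α * β, -α; -β, 1] ![u, v] 0) *
        (Matrix.mulVec !![1 + α * β, -α; -β, 1] ![u, v] 1) < 0) := by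
  have h0 : Matrix.mulVec !![1 + α * β, -α; -β, 1] ![u, v] 0
      = (1 + α * β) * u + (-α) * v := by
    simp [Matrix.mulVec, dotProduct, Fin.sum_univ_two]
  have h1 : Matrix.mulVec !![1 + α * β, -α; -β, 1] ![u, v] 1
      = (-β) * u + 1 * v := by
    simp [Matrix.mulVec, dotProduct, Fin.sum_univ_two]
  have key : (Matrix.mulVec !![1 + α * β, -α; -β, 1] ![u, v] 0) *
      (Matrix.mulVec !![1 + α * β, -α; -β, 1] ![u, v] 1) < 0 := by
    rw [h0, h1]
    rcases lt_or_gt_of_ne (fun h : u = 0 => by simp [h] at hw) with hu | hu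
    · have hv : 0 < v := by nlinarith
      have : (1 + α * β) * u + (-α) * v < 0 := by
        nlinarith [mul_nonneg (mul_nonneg hα hβ) (neg_nonneg.2 hu.le), mul_nonneg hα hv.le]
      have h2 : 0 < (-β) * u + 1 * v := by nlinarith
      nlinarith
    · have hv : v < 0 := by nlinarith
      have : 0 < (1 + α * β) * u + (-α) * v := by
        nlinarith [mul_nonneg (mul_nonneg hα hβ) hu.le, mul_nonneg hα (neg_nonneg.2 hv.le)]
      have h2 : (-β) * u + 1 * v < 0 := by nlinarith
      nlinarith
  refine ⟨⟨key.le, fun h => ?_⟩, fun _ _ => key⟩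
  rw [h] at key
  simp at key
end

section
/- Let M_i = (1, a_i; b_i, 1 + a_i b_i) for i = 1,…,n with all a_i, b_i > 0, and set λ_i = √(1 + min(a_i, b_i)²). Then for any w = (u,v) with uv > 0, ‖M_n ⋯ M_2 M_1 w‖ ≥ (∏_{i=1}^n λ_i)·‖w‖, and in particular if λ = min_i λ_i then ‖M_n⋯M_1 w‖ ≥ λⁿ‖w‖. -/
/-!
`(1, a; b, 1 + ab)` is the product of the shears `(1, 0; b, 1)` and `(1, a; 0, 1)`.
On the cone `uv > 0` each shear adds a term of the same sign, so it stays in the cone and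
only increases squares: `(u, v) ↦ (u', v) = (u + av, v)` has `u'² ≥ u² + a²v²`, and then
`(u', v) ↦ (u', bu' + v)` has `(bu' + v)² ≥ b²u'² + v² ≥ b²u² + v²`. Hence the squared norm
grows to at least `(1 + b²)u² + (1 + a²)v² ≥ (1 + min(a, b)²)(u² + v²)`. Cone invariance lets
these one-step bounds be multiplied along the product.
-/

open Matrix Finset

def returnMatrix (a b : ℝ) : Matrix (Fin 2) (Fin 2) ℝ := !![1, a; b, 1 + a * b]

def posCone : Set (Fin 2 → ℝ) := {w | 0 < w 0 * w 1}

theorem mulVec_listProd_expansion {R ι : Type*} [CommSemiring R] [PartialOrder R]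
    [IsOrderedRing R] [Fintype ι] [DecidableEq ι] {n : ℕ} (M : Fin n → Matrix ι ι R)
    (c : Fin n → R) (hc : ∀ i, 0 ≤ c i) (S : Set (ι → R)) (q : (ι → R) → R)
    (hM : ∀ i, ∀ w ∈ S, M i *ᵥ w ∈ S ∧ c i * q w ≤ q (M i *ᵥ w)) :
    ∀ w ∈ S, (List.ofFn M).reverse.prod *ᵥ w ∈ S ∧
      (∏ i, c i) * q w ≤ q ((List.ofFn M).reverse.prod *ᵥ w) := by
  induction n with
  | zero => simp
  | succ n ih =>
    intro w hw
    obtain ⟨hw₁, hq₁⟩ := hM 0 w hw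
    obtain ⟨hS, hq⟩ := ih (M ∘ Fin.succ) (c ∘ Fin.succ) (fun i => hc _) (fun i => hM _) _ hw₁
    rw [List.ofFn_succ, List.reverse_cons, List.prod_append, List.prod_singleton,
      ← mulVec_mulVec, Fin.prod_univ_succ]
    refine ⟨hS, ?_⟩
    calc c 0 * (∏ i : Fin n, c i.succ) * q w = (∏ i : Fin n, c i.succ) * (c 0 * q w) := by ring
      _ ≤ (∏ i : Fin n, c i.succ) * q (M 0 *ᵥ w) :=
        mul_le_mul_of_nonneg_left hq₁ (prod_nonneg fun i _ => hc _)
      _ ≤ _ := hq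

theorem shear_sq_add_sq_le {a u v : ℝ} (ha : 0 ≤ a) (huv : 0 < u * v) :
    u ^ 2 + a ^ 2 * v ^ 2 ≤ (u + a * v) ^ 2 := by
  nlinarith [mul_nonneg ha huv.le]

theorem mulVec_returnMatrix (a b : ℝ) (w : Fin 2 → ℝ) :
    returnMatrix a b *ᵥ w = ![w 0 + a * w 1, w 1 + b * (w 0 + a * w 1)] := by
  ext i
  fin_cases i <;> simp [returnMatrix, mulVec, dotProduct, Fin.sum_univ_two]; ring

theorem returnMatrix_expansion {a b : ℝ} (ha : 0 < a) (hb : 0 < b) {w : Fin 2 → ℝ}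
    (hw : w ∈ posCone) :
    returnMatrix a b *ᵥ w ∈ posCone ∧
      (1 + min a b ^ 2) * (w 0 ^ 2 + w 1 ^ 2) ≤
        (returnMatrix a b *ᵥ w) 0 ^ 2 + (returnMatrix a b *ᵥ w) 1 ^ 2 := by
  simp only [posCone, Set.mem_ofPred_eq, mulVec_returnMatrix, cons_val_zero, cons_val_one] at hw ⊢
  set u := w 0
  set v := w 1
  set u' := u + a * v
  have hvu' : 0 < v * u' := by nlinarith [sq_nonneg v]
  have hu' : u ^ 2 + a ^ 2 * v ^ 2 ≤ u' ^ 2 := shear_sq_add_sq_le ha.le hw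
  have hv' : v ^ 2 + b ^ 2 * u' ^ 2 ≤ (v + b * u') ^ 2 := shear_sq_add_sq_le hb.le hvu'
  have hma : min a b ^ 2 ≤ a ^ 2 := pow_le_pow_left₀ (le_min ha.le hb.le) (min_le_left a b) 2
  have hmb : min a b ^ 2 ≤ b ^ 2 := pow_le_pow_left₀ (le_min ha.le hb.le) (min_le_right a b) 2
  have hu'' : u ^ 2 ≤ u' ^ 2 := le_trans (le_add_of_nonneg_right (by positivity)) hu'
  constructor
  · nlinarith [mul_nonneg hb.le (sq_nonneg u')]
  · nlinarith [mul_le_mul_of_nonneg_right hma (sq_nonneg v),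
      mul_le_mul_of_nonneg_right hmb (sq_nonneg u), mul_le_mul_of_nonneg_left hu'' (sq_nonneg b)]

/-- Composition of return-map expansions: a product of matrices
`M_i = (1, a_i; b_i, 1 + a_i b_i)` with `a_i, b_i > 0` expands the Euclidean
norm of a cone vector by at least `∏ λ_i`, where `λ_i = √(1 + min(a_i,b_i)²)`;
in particular by `λⁿ` where `λ = min_i λ_i`. -/
theorem composed_expansion (n : ℕ) (a b : Fin n → ℝ) (ha : ∀ i, 0 < a i)
    (hb : ∀ i, 0 < b i) (u v : ℝ) (hw : u * v > 0) :
    (Real.sqrt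
        (((List.ofFn fun i : Fin n =>
              (!![1, a i; b i, 1 + a i * b i] : Matrix (Fin 2) (Fin 2) ℝ)).reverse.prod.mulVec
            ![u, v] 0) ^ 2 +
          ((List.ofFn fun i : Fin n =>
              (!![1, a i; b i, 1 + a i * b i] : Matrix (Fin 2) (Fin 2) ℝ)).reverse.prod.mulVec
            ![u, v] 1) ^ 2) ≥
      (∏ i : Fin n, Real.sqrt (1 + min (a i) (b i) ^ 2)) * Real.sqrt (u ^ 2 + v ^ 2)) ∧
    ∀ lam : ℝ,
      IsGreatest {l : ℝ | ∀ i : Fin n, l ≤ Real.sqrt (1 + min (a i) (b i) ^ 2)} lam →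
      Real.sqrt
          (((List.ofFn fun i : Fin n =>
                (!![1, a i; b i, 1 + a i * b i] : Matrix (Fin 2) (Fin 2) ℝ)).reverse.prod.mulVec
              ![u, v] 0) ^ 2 +
            ((List.ofFn fun i : Fin n =>
                (!![1, a i; b i, 1 + a i * b i] : Matrix (Fin 2) (Fin 2) ℝ)).reverse.prod.mulVec
              ![u, v] 1) ^ 2) ≥
        lam ^ n * Real.sqrt (u ^ 2 + v ^ 2) := by
  obtain ⟨-, hsq⟩ := mulVec_listProd_expansion (fun i => returnMatrix (a i) (b i))
    (fun i => 1 + min (a i) (b i) ^ 2) (fun i => by positivity) posCone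
    (fun w => w 0 ^ 2 + w 1 ^ 2) (fun i w hw => returnMatrix_expansion (ha i) (hb i) hw)
    ![u, v] (by simpa [posCone] using hw)
  simp only [cons_val_zero, cons_val_one] at hsq
  have hprod := Real.sqrt_le_sqrt hsq
  rw [Real.sqrt_mul (prod_nonneg fun i _ => by positivity),
    Real.sqrt_prod _ fun i _ => by positivity] at hprod
  refine ⟨hprod, fun lam hlam => hprod.trans' ?_⟩
  have hlam0 : 0 ≤ lam := hlam.2 fun i => Real.sqrt_nonneg _
  gcongr
  calc lam ^ n = ∏ _i : Fin n, lam := by simp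
    _ ≤ _ := prod_le_prod (fun _ _ => hlam0) fun i _ => hlam.1 i
end

section
/- Let T be a measure-preserving invertible transformation of a probability space (X,μ) and Y ⊆ X measurable with the property that μ-a.e. point of X visits Y infinitely often under forward iteration. Then for μ-a.e. x ∈ X, the visit frequency lim_{n→∞} (1/n)·#{1 ≤ k ≤ n : T^k(x) ∈ Y} exists and is strictly positive. -/
/-!
The visit frequency of `x` is the Birkhoff average of `𝟙_Y` along the orbit of `T x`. Birkhoff's
pointwise ergodic theorem for bounded observables follows from Garsia's maximal ergodic inequality
`∫_{∃ n, Sₙ g > 0} g ≥ 0`: on the invariant set where `liminf < a < b < limsup`, applying it to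
`g - b` and to `a - g` gives `b μ E ≤ ∫_E g ≤ a μ E`, so that set is null.
The limit of the averages is `T`-invariant, so `B = {limit = 0}` is an invariant set with
`μ (Y ∩ B) = ∫_B 𝟙_Y = ∫_B limit = 0`. Almost every orbit starting in `B` therefore stays in `B`
without ever meeting `Y`, which the recurrence hypothesis rules out unless `μ B = 0`.
-/

open Filter MeasureTheory Topology
open scoped Classical

section LimsupOfTendstoSub

variable {ι : Type*} {l : Filter ι} [l.NeBot] {u v : ι → ℝ}

lemma limsup_eq_of_tendsto_sub (hv : IsBoundedUnder (· ≤ ·) l v)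
    (hv' : IsBoundedUnder (· ≥ ·) l v) (h : Tendsto (u - v) l (𝓝 0)) :
    limsup u l = limsup v l := by
  have upper := limsup_add_le hv' hv h.isBoundedUnder_ge.isCoboundedUnder_le h.isBoundedUnder_le
  have lower := le_limsup_add hv hv'.isCoboundedUnder_le h.isBoundedUnder_le h.isBoundedUnder_ge
  rw [add_sub_cancel, h.limsup_eq, add_zero] at upper
  rw [add_sub_cancel, h.liminf_eq, add_zero] at lower
  exact le_antisymm upper lower

lemma liminf_eq_of_tendsto_sub (hv : IsBoundedUnder (· ≤ ·) l v)
    (hv' : IsBoundedUnder (· ≥ ·) l v) (h : Tendsto (u - v) l (𝓝 0)) :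
    liminf u l = liminf v l := by
  have upper := liminf_add_le h.isBoundedUnder_ge h.isBoundedUnder_le hv' hv.isCoboundedUnder_ge
  have lower := le_liminf_add hv' hv h.isBoundedUnder_ge h.isBoundedUnder_le.isCoboundedUnder_ge
  rw [sub_add_cancel, h.limsup_eq, zero_add] at upper
  rw [add_sub_cancel, h.liminf_eq, add_zero] at lower
  exact le_antisymm upper lower

end LimsupOfTendstoSub

section BirkhoffSum

variable {X : Type*} {τ : X → X} {g : X → ℝ} {C : ℝ}

/-- `maxBirkhoffSum τ g n x = max (0, S₁ x, …, Sₙ x)`, where `Sₖ = birkhoffSum τ g k`. -/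
noncomputable def maxBirkhoffSum (τ : X → X) (g : X → ℝ) : ℕ → X → ℝ
  | 0 => 0
  | n + 1 => fun x => max 0 (g x + maxBirkhoffSum τ g n (τ x))

lemma maxBirkhoffSum_succ (n : ℕ) (x : X) :
    maxBirkhoffSum τ g (n + 1) x = max 0 (g x + maxBirkhoffSum τ g n (τ x)) := rfl

lemma maxBirkhoffSum_nonneg (n : ℕ) (x : X) : 0 ≤ maxBirkhoffSum τ g n x := by
  cases n with
  | zero => rfl
  | succ n => exact le_max_left _ _

lemma maxBirkhoffSum_le_succ (n : ℕ) (x : X) :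
    maxBirkhoffSum τ g n x ≤ maxBirkhoffSum τ g (n + 1) x := by
  induction n generalizing x with
  | zero => exact maxBirkhoffSum_nonneg 1 x
  | succ n ih => exact max_le_max le_rfl (add_le_add le_rfl (ih (τ x)))

lemma maxBirkhoffSum_le_birkhoffSum_abs (n : ℕ) (x : X) :
    maxBirkhoffSum τ g n x ≤ birkhoffSum τ (|g ·|) n x := by
  induction n generalizing x with
  | zero => rfl
  | succ n ih =>
    rw [maxBirkhoffSum_succ, birkhoffSum_succ']
    exact max_le (add_nonneg (abs_nonneg _) ((maxBirkhoffSum_nonneg n (τ x)).trans (ih _)))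
      (add_le_add (le_abs_self _) (ih (τ x)))

lemma birkhoffSum_le_maxBirkhoffSum {k n : ℕ} (hkn : k ≤ n) (x : X) :
    birkhoffSum τ g k x ≤ maxBirkhoffSum τ g n x := by
  induction k generalizing n x with
  | zero => exact maxBirkhoffSum_nonneg n x
  | succ k ih =>
    obtain ⟨n, rfl⟩ := Nat.exists_eq_add_of_le' (Nat.succ_pos k |>.trans_le hkn)
    rw [birkhoffSum_succ', maxBirkhoffSum_succ]
    exact le_max_of_le_right (add_le_add le_rfl (ih (by omega) (τ x)))

lemma maxBirkhoffSum_succ_of_pos {n : ℕ} {x : X} (h : 0 < maxBirkhoffSum τ g (n + 1) x) :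
    maxBirkhoffSum τ g (n + 1) x = g x + maxBirkhoffSum τ g n (τ x) :=
  max_eq_right (not_le.1 fun hle => h.ne' (max_eq_left hle)).le

lemma exists_maxBirkhoffSum_le_birkhoffSum {n : ℕ} {x : X} (h : 0 < maxBirkhoffSum τ g n x) :
    ∃ k, maxBirkhoffSum τ g n x ≤ birkhoffSum τ g k x := by
  induction n generalizing x with
  | zero => exact absurd h (lt_irrefl 0)
  | succ n ih =>
    rw [maxBirkhoffSum_succ_of_pos h]
    rcases (maxBirkhoffSum_nonneg n (τ x)).lt_or_eq' with hpos | hzero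
    · obtain ⟨k, hk⟩ := ih hpos
      exact ⟨k + 1, by rw [birkhoffSum_succ']; exact add_le_add le_rfl hk⟩
    · exact ⟨1, by simp [hzero]⟩

lemma exists_maxBirkhoffSum_pos_iff (x : X) :
    (∃ n, 0 < maxBirkhoffSum τ g n x) ↔ ∃ n, 0 < birkhoffSum τ g n x :=
  ⟨fun ⟨_, h⟩ => (exists_maxBirkhoffSum_le_birkhoffSum h).imp fun _ hk => h.trans_le hk,
    fun ⟨n, h⟩ => ⟨n, h.trans_le (birkhoffSum_le_maxBirkhoffSum le_rfl x)⟩⟩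

lemma maxBirkhoffSum_succ_sub_le_indicator (n : ℕ) (x : X) :
    maxBirkhoffSum τ g (n + 1) x - maxBirkhoffSum τ g n (τ x) ≤
      {y | 0 < maxBirkhoffSum τ g (n + 1) y}.indicator g x := by
  by_cases h : 0 < maxBirkhoffSum τ g (n + 1) x
  · rw [Set.indicator_of_mem (show x ∈ {y | 0 < maxBirkhoffSum τ g (n + 1) y} from h),
      maxBirkhoffSum_succ_of_pos h, add_sub_cancel_right]
  · rw [Set.indicator_of_notMem (show x ∉ {y | 0 < maxBirkhoffSum τ g (n + 1) y} from h),
      (maxBirkhoffSum_nonneg _ x).antisymm' (not_lt.1 h), zero_sub, neg_nonpos]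
    exact maxBirkhoffSum_nonneg n (τ x)

lemma birkhoffSum_sub_const (b : ℝ) (n : ℕ) (x : X) :
    birkhoffSum τ (fun y => g y - b) n x = birkhoffSum τ g n x - n * b := by
  simp [birkhoffSum, Finset.sum_sub_distrib]

lemma const_sub_birkhoffSum (a : ℝ) (n : ℕ) (x : X) :
    birkhoffSum τ (fun y => a - g y) n x = n * a - birkhoffSum τ g n x := by
  simp [birkhoffSum, Finset.sum_sub_distrib]

lemma abs_birkhoffAverage_le (hgC : ∀ x, |g x| ≤ C) (n : ℕ) (x : X) :
    |birkhoffAverage ℝ τ g n x| ≤ C := by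
  rcases eq_or_ne n 0 with rfl | hn
  · simpa using (abs_nonneg _).trans (hgC x)
  have hsum : |birkhoffSum τ g n x| ≤ n * C := calc
    |birkhoffSum τ g n x| ≤ ∑ k ∈ Finset.range n, |g (τ^[k] x)| := Finset.abs_sum_le_sum_abs _ _
    _ ≤ ∑ k ∈ Finset.range n, C := Finset.sum_le_sum fun k _ => hgC _
    _ = n * C := by simp
  rw [birkhoffAverage, smul_eq_mul, abs_mul, abs_inv, Nat.abs_cast,
    inv_mul_le_iff₀ (by positivity)]
  exact hsum

lemma isBoundedUnder_le_birkhoffAverage (hgC : ∀ x, |g x| ≤ C) (x : X) :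
    IsBoundedUnder (· ≤ ·) atTop (birkhoffAverage ℝ τ g · x) :=
  isBoundedUnder_of ⟨C, fun n => (abs_le.1 (abs_birkhoffAverage_le hgC n x)).2⟩

lemma isBoundedUnder_ge_birkhoffAverage (hgC : ∀ x, |g x| ≤ C) (x : X) :
    IsBoundedUnder (· ≥ ·) atTop (birkhoffAverage ℝ τ g · x) :=
  isBoundedUnder_of ⟨-C, fun n => (abs_le.1 (abs_birkhoffAverage_le hgC n x)).1⟩

lemma abs_indicator_one_le_one (Y : Set X) (x : X) : |Y.indicator (1 : X → ℝ) x| ≤ 1 := by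
  by_cases hx : x ∈ Y <;> simp [hx]

lemma isBounded_range_of_abs_le (hgC : ∀ x, |g x| ≤ C) : Bornology.IsBounded (Set.range g) :=
  isBounded_iff_forall_norm_le.2 ⟨C, by rintro _ ⟨x, rfl⟩; exact hgC x⟩

-- Junk values unless the Birkhoff averages are bounded, hence the hypotheses `|g x| ≤ C` below.
noncomputable def birkhoffLimsup (τ : X → X) (g : X → ℝ) (x : X) : ℝ :=
  limsup (birkhoffAverage ℝ τ g · x) atTop

noncomputable def birkhoffLiminf (τ : X → X) (g : X → ℝ) (x : X) : ℝ :=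
  liminf (birkhoffAverage ℝ τ g · x) atTop

lemma birkhoffLimsup_apply (hgC : ∀ x, |g x| ≤ C) (x : X) :
    birkhoffLimsup τ g (τ x) = birkhoffLimsup τ g x :=
  limsup_eq_of_tendsto_sub (isBoundedUnder_le_birkhoffAverage hgC x)
    (isBoundedUnder_ge_birkhoffAverage hgC x)
    (tendsto_birkhoffAverage_apply_sub_birkhoffAverage' ℝ (isBounded_range_of_abs_le hgC) τ x)

lemma birkhoffLiminf_apply (hgC : ∀ x, |g x| ≤ C) (x : X) :
    birkhoffLiminf τ g (τ x) = birkhoffLiminf τ g x :=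
  liminf_eq_of_tendsto_sub (isBoundedUnder_le_birkhoffAverage hgC x)
    (isBoundedUnder_ge_birkhoffAverage hgC x)
    (tendsto_birkhoffAverage_apply_sub_birkhoffAverage' ℝ (isBounded_range_of_abs_le hgC) τ x)

lemma exists_birkhoffSum_sub_pos_of_lt_birkhoffLimsup (hgC : ∀ x, |g x| ≤ C) {b : ℝ} {x : X}
    (h : b < birkhoffLimsup τ g x) : ∃ n, 0 < birkhoffSum τ (fun y => g y - b) n x := by
  obtain ⟨n, hb, hn⟩ := ((frequently_lt_of_lt_limsup
    (isBoundedUnder_ge_birkhoffAverage hgC x).isCoboundedUnder_le h).and_eventually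
    (eventually_ne_atTop 0)).exists
  refine ⟨n, ?_⟩
  rw [birkhoffAverage, smul_eq_mul, lt_inv_mul_iff₀ (by positivity)] at hb
  rwa [birkhoffSum_sub_const, sub_pos]

lemma exists_const_sub_birkhoffSum_pos_of_birkhoffLiminf_lt (hgC : ∀ x, |g x| ≤ C) {a : ℝ}
    {x : X} (h : birkhoffLiminf τ g x < a) : ∃ n, 0 < birkhoffSum τ (fun y => a - g y) n x := by
  obtain ⟨n, ha, hn⟩ := ((frequently_lt_of_liminf_lt
    (isBoundedUnder_le_birkhoffAverage hgC x).isCoboundedUnder_ge h).and_eventually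
    (eventually_ne_atTop 0)).exists
  refine ⟨n, ?_⟩
  rw [birkhoffAverage, smul_eq_mul, inv_mul_lt_iff₀ (by positivity)] at ha
  rwa [const_sub_birkhoffSum, sub_pos]

lemma preimage_setOf_birkhoffLiminf_lt_lt_birkhoffLimsup (hgC : ∀ x, |g x| ≤ C) (a b : ℝ) :
    τ ⁻¹' {x | birkhoffLiminf τ g x < a ∧ b < birkhoffLimsup τ g x} =
      {x | birkhoffLiminf τ g x < a ∧ b < birkhoffLimsup τ g x} := by
  ext x
  simp only [Set.mem_preimage, Set.mem_ofPred_eq, birkhoffLiminf_apply hgC,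
    birkhoffLimsup_apply hgC]

end BirkhoffSum

section Ergodic

variable {X : Type*} [MeasurableSpace X] {μ : Measure X} {τ : X → X} {g : X → ℝ} {C : ℝ}

lemma MeasureTheory.MeasurePreserving.integral_comp_of_aestronglyMeasurable
    (hτ : MeasurePreserving τ μ μ) (hg : AEStronglyMeasurable g μ) :
    ∫ x, g (τ x) ∂μ = ∫ x, g x ∂μ := by
  rw [← integral_map hτ.aemeasurable (by rwa [hτ.map_eq]), hτ.map_eq]

lemma MeasureTheory.MeasurePreserving.restrict_of_preimage_eq (hτ : MeasurePreserving τ μ μ)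
    {s : Set X} (hs : MeasurableSet s) (hinv : τ ⁻¹' s = s) :
    MeasurePreserving τ (μ.restrict s) (μ.restrict s) := by
  simpa only [hinv] using hτ.restrict_preimage hs

lemma integrable_birkhoffSum (hτ : MeasurePreserving τ μ μ) (hg : Integrable g μ) (n : ℕ) :
    Integrable (birkhoffSum τ g n) μ :=
  integrable_finsetSum _ fun k _ => (hτ.iterate k).integrable_comp_of_integrable hg

lemma measurable_maxBirkhoffSum (hτ : Measurable τ) (hg : Measurable g) (n : ℕ) :
    Measurable (maxBirkhoffSum τ g n) := by
  induction n with
  | zero => exact measurable_const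
  | succ n ih => exact measurable_const.max (hg.add (ih.comp hτ))

lemma integrable_maxBirkhoffSum (hτ : MeasurePreserving τ μ μ) (hgm : Measurable g)
    (hg : Integrable g μ) (n : ℕ) : Integrable (maxBirkhoffSum τ g n) μ :=
  (integrable_birkhoffSum hτ hg.abs n).mono'
    (measurable_maxBirkhoffSum hτ.measurable hgm n).aestronglyMeasurable
    (ae_of_all _ fun x => by
      rw [Real.norm_of_nonneg (maxBirkhoffSum_nonneg n x)]
      exact maxBirkhoffSum_le_birkhoffSum_abs n x)

lemma setIntegral_maxBirkhoffSum_pos_nonneg (hτ : MeasurePreserving τ μ μ) (hgm : Measurable g)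
    (hg : Integrable g μ) (n : ℕ) : 0 ≤ ∫ x in {y | 0 < maxBirkhoffSum τ g n y}, g x ∂μ := by
  cases n with
  | zero => simp [maxBirkhoffSum]
  | succ n =>
    have hM := integrable_maxBirkhoffSum hτ hgm hg
    have hset : MeasurableSet {y | 0 < maxBirkhoffSum τ g (n + 1) y} :=
      measurableSet_lt measurable_const (measurable_maxBirkhoffSum hτ.measurable hgm _)
    have hMτ : Integrable (fun x => maxBirkhoffSum τ g n (τ x)) μ :=
      hτ.integrable_comp_of_integrable (hM n)
    -- Garsia: `Mₙ₊₁ - Mₙ ∘ τ ≤ 𝟙_{Mₙ₊₁ > 0} g`, while `∫ Mₙ ∘ τ = ∫ Mₙ ≤ ∫ Mₙ₊₁`.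
    have hkey : ∫ x, (maxBirkhoffSum τ g (n + 1) x - maxBirkhoffSum τ g n (τ x)) ∂μ ≤
        ∫ x, {y | 0 < maxBirkhoffSum τ g (n + 1) y}.indicator g x ∂μ :=
      integral_mono ((hM (n + 1)).sub hMτ)
        (hg.indicator hset) (maxBirkhoffSum_succ_sub_le_indicator n)
    rw [integral_indicator hset, integral_sub (hM (n + 1)) hMτ,
      hτ.integral_comp_of_aestronglyMeasurable (hM n).1] at hkey
    have hmono := integral_mono (hM n) (hM (n + 1)) (maxBirkhoffSum_le_succ n)
    linarith

theorem setIntegral_exists_birkhoffSum_pos_nonneg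
    (hτ : MeasurePreserving τ μ μ) (hgm : Measurable g) (hg : Integrable g μ) :
    0 ≤ ∫ x in {y | ∃ n, 0 < birkhoffSum τ g n y}, g x ∂μ := by
  have hunion : (⋃ n, {y | 0 < maxBirkhoffSum τ g n y}) = {y | ∃ n, 0 < birkhoffSum τ g n y} := by
    ext x
    simpa only [Set.mem_iUnion, Set.mem_ofPred_eq] using exists_maxBirkhoffSum_pos_iff x
  have hlim := tendsto_setIntegral_of_monotone (μ := μ) (f := g)
    (s := fun n => {y | 0 < maxBirkhoffSum τ g n y})
    (fun n => measurableSet_lt measurable_const (measurable_maxBirkhoffSum hτ.measurable hgm n))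
    (monotone_nat_of_le_succ fun n x hx => lt_of_lt_of_le hx (maxBirkhoffSum_le_succ n x))
    hg.integrableOn
  rw [hunion] at hlim
  exact ge_of_tendsto' hlim (setIntegral_maxBirkhoffSum_pos_nonneg hτ hgm hg)

theorem integral_nonneg_of_ae_exists_birkhoffSum_pos
    (hτ : MeasurePreserving τ μ μ) (hgm : Measurable g) (hg : Integrable g μ)
    (hpos : ∀ᵐ x ∂μ, ∃ n, 0 < birkhoffSum τ g n x) : 0 ≤ ∫ x, g x ∂μ := by
  rw [← Measure.restrict_eq_self_of_ae_mem hpos]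
  exact setIntegral_exists_birkhoffSum_pos_nonneg hτ hgm hg

lemma measurable_birkhoffAverage (hτ : Measurable τ) (hg : Measurable g) (n : ℕ) :
    Measurable (birkhoffAverage ℝ τ g n) :=
  have hS : Measurable (birkhoffSum τ g n) :=
    Finset.measurable_sum (f := fun k x => g (τ^[k] x)) _ fun k _ => hg.comp (hτ.iterate k)
  hS.fun_const_smul _

lemma measurable_birkhoffLimsup (hτ : Measurable τ) (hg : Measurable g) :
    Measurable (birkhoffLimsup τ g) :=
  .limsup (measurable_birkhoffAverage hτ hg)

lemma measurable_birkhoffLiminf (hτ : Measurable τ) (hg : Measurable g) :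
    Measurable (birkhoffLiminf τ g) :=
  .liminf (measurable_birkhoffAverage hτ hg)

lemma measure_birkhoffLiminf_lt_lt_birkhoffLimsup [IsFiniteMeasure μ]
    (hτ : MeasurePreserving τ μ μ) (hg : Measurable g) (hgC : ∀ x, |g x| ≤ C) {a b : ℝ}
    (hab : a < b) : μ {x | birkhoffLiminf τ g x < a ∧ b < birkhoffLimsup τ g x} = 0 := by
  set E := {x | birkhoffLiminf τ g x < a ∧ b < birkhoffLimsup τ g x}
  have hE : MeasurableSet E :=
    (measurableSet_lt (measurable_birkhoffLiminf hτ.measurable hg) measurable_const).inter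
      (measurableSet_lt measurable_const (measurable_birkhoffLimsup hτ.measurable hg))
  have hτE := hτ.restrict_of_preimage_eq hE
    (preimage_setOf_birkhoffLiminf_lt_lt_birkhoffLimsup hgC a b)
  have hgi : Integrable g (μ.restrict E) :=
    .of_bound hg.aestronglyMeasurable C (ae_of_all _ hgC)
  have hupper := integral_nonneg_of_ae_exists_birkhoffSum_pos hτE (hg.sub_const b)
    (hgi.sub (integrable_const b))
    (ae_restrict_of_forall_mem hE fun x hx =>
      exists_birkhoffSum_sub_pos_of_lt_birkhoffLimsup hgC hx.2)
  have hlower := integral_nonneg_of_ae_exists_birkhoffSum_pos hτE (hg.const_sub a)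
    ((integrable_const a).sub hgi)
    (ae_restrict_of_forall_mem hE fun x hx =>
      exists_const_sub_birkhoffSum_pos_of_birkhoffLiminf_lt hgC hx.1)
  rw [integral_sub hgi (integrable_const b), integral_const, smul_eq_mul] at hupper
  rw [integral_sub (integrable_const a) hgi, integral_const, smul_eq_mul] at hlower
  have hzero : (μ.restrict E).real Set.univ = 0 := by
    nlinarith [measureReal_nonneg (μ := μ.restrict E) (s := Set.univ)]
  rwa [measureReal_restrict_apply_univ, measureReal_eq_zero_iff] at hzero

theorem ae_tendsto_birkhoffAverage [IsFiniteMeasure μ] (hτ : MeasurePreserving τ μ μ)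
    (hg : Measurable g) (hgC : ∀ x, |g x| ≤ C) :
    ∀ᵐ x ∂μ, Tendsto (birkhoffAverage ℝ τ g · x) atTop (𝓝 (birkhoffLimsup τ g x)) := by
  have hosc : ∀ᵐ x ∂μ, ∀ a b : ℚ, (a : ℝ) < b →
      ¬(birkhoffLiminf τ g x < a ∧ b < birkhoffLimsup τ g x) := by
    refine ae_all_iff.2 fun a => ae_all_iff.2 fun b => ?_
    by_cases hab : (a : ℝ) < b
    · filter_upwards [measure_eq_zero_iff_ae_notMem.1
        (measure_birkhoffLiminf_lt_lt_birkhoffLimsup hτ hg hgC hab)] with x hx _ using hx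
    · exact ae_of_all _ fun x h => absurd h hab
  filter_upwards [hosc] with x hx
  have hle := isBoundedUnder_le_birkhoffAverage (τ := τ) hgC x
  have hge := isBoundedUnder_ge_birkhoffAverage (τ := τ) hgC x
  refine tendsto_of_liminf_eq_limsup (le_antisymm (liminf_le_limsup hle hge) ?_) rfl hle hge
  by_contra! hlt
  obtain ⟨a, hLa, hab⟩ := exists_rat_btwn hlt
  obtain ⟨b, hab, hbU⟩ := exists_rat_btwn hab
  exact hx a b hab ⟨hLa, hbU⟩

lemma integral_birkhoffAverage (hτ : MeasurePreserving τ μ μ) (hg : Integrable g μ) {n : ℕ}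
    (hn : n ≠ 0) : ∫ x, birkhoffAverage ℝ τ g n x ∂μ = ∫ x, g x ∂μ := by
  have hcomp (k : ℕ) : ∫ x, g (τ^[k] x) ∂μ = ∫ x, g x ∂μ :=
    (hτ.iterate k).integral_comp_of_aestronglyMeasurable hg.1
  simp only [birkhoffAverage, birkhoffSum, smul_eq_mul]
  rw [integral_const_mul, integral_finsetSum (f := fun k x => g (τ^[k] x)) _
    fun k _ => (hτ.iterate k).integrable_comp_of_integrable hg]
  simp only [hcomp, Finset.sum_const, Finset.card_range, nsmul_eq_mul]
  field_simp

theorem integral_birkhoffLimsup [IsFiniteMeasure μ] (hτ : MeasurePreserving τ μ μ)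
    (hg : Measurable g) (hgC : ∀ x, |g x| ≤ C) :
    ∫ x, birkhoffLimsup τ g x ∂μ = ∫ x, g x ∂μ := by
  have hgi : Integrable g μ := .of_bound hg.aestronglyMeasurable C (ae_of_all _ hgC)
  have hlim := tendsto_integral_of_dominated_convergence (fun _ => C)
    (fun n => (measurable_birkhoffAverage hτ.measurable hg n).aestronglyMeasurable)
    (integrable_const C) (fun n => ae_of_all _ (abs_birkhoffAverage_le hgC n))
    (ae_tendsto_birkhoffAverage hτ hg hgC)
  refine tendsto_nhds_unique hlim (tendsto_const_nhds.congr' ?_)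
  filter_upwards [eventually_ne_atTop 0] with n hn
  exact (integral_birkhoffAverage hτ hgi hn).symm

theorem ae_birkhoffLimsup_indicator_pos [IsFiniteMeasure μ] (hτ : MeasurePreserving τ μ μ)
    {Y : Set X} (hY : MeasurableSet Y) (hvisit : ∀ᵐ x ∂μ, ∃ n, τ^[n] x ∈ Y) :
    ∀ᵐ x ∂μ, 0 < birkhoffLimsup τ (Y.indicator 1) x := by
  have hgC := abs_indicator_one_le_one (X := X) Y
  have hg : Measurable (Y.indicator (1 : X → ℝ)) := measurable_one.indicator hY
  set B := {x | birkhoffLimsup τ (Y.indicator 1) x ≤ 0}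
  have hB : MeasurableSet B :=
    measurableSet_le (measurable_birkhoffLimsup hτ.measurable hg) measurable_const
  have hBinv : τ ⁻¹' B = B := by
    ext x
    simp only [B, Set.mem_preimage, Set.mem_ofPred_eq, birkhoffLimsup_apply hgC]
  have hYB : μ (Y ∩ B) = 0 := by
    have h := integral_birkhoffLimsup (hτ.restrict_of_preimage_eq hB hBinv) hg hgC
    rw [integral_indicator_one hY, measureReal_restrict_apply hY] at h
    rw [← measureReal_eq_zero_iff, ← h]
    exact le_antisymm (setIntegral_nonpos hB fun x hx => hx) (h ▸ measureReal_nonneg)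
  have hnever : ∀ᵐ x ∂μ, ∀ n, τ^[n] x ∉ Y ∩ B := ae_all_iff.2 fun n =>
    (hτ.iterate n).quasiMeasurePreserving.ae (measure_eq_zero_iff_ae_notMem.1 hYB)
  have hmaps : Set.MapsTo τ B B := hBinv.ge
  filter_upwards [hvisit, hnever] with x ⟨n, hn⟩ hx
  by_contra! hxB
  exact hx n ⟨hn, hmaps.iterate n hxB⟩

end Ergodic

lemma card_filter_Icc_iterate_mem_eq_birkhoffSum {X : Type*} (τ : X → X) (Y : Set X) (n : ℕ)
    (x : X) : (((Finset.Icc 1 n).filter fun k => τ^[k] x ∈ Y).card : ℝ) =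
      birkhoffSum τ (Y.indicator 1) n (τ x) := by
  rw [Finset.natCast_card_filter, birkhoffSum, ← Finset.Ico_add_one_right_eq_Icc,
    Finset.sum_Ico_eq_sum_range]
  refine Finset.sum_congr (by simp) fun k _ => ?_
  rw [← Function.iterate_succ_apply, Nat.succ_eq_add_one, add_comm, Set.indicator_apply]
  congr

theorem positive_visit_frequency_general {X : Type*} [MeasurableSpace X]
    (μ : Measure X) [IsProbabilityMeasure μ] (T : X ≃ᵐ X)
    (hT : MeasurePreserving T μ μ) (Y : Set X) (hY : MeasurableSet Y)
    (hio : ∀ᵐ x ∂μ, {n : ℕ | T^[n] x ∈ Y}.Infinite) :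
    ∀ᵐ x ∂μ, ∃ c : ℝ, 0 < c ∧
      Tendsto
        (fun n : ℕ =>
          (((Finset.Icc 1 n).filter fun k => T^[k] x ∈ Y).card : ℝ) / n)
        atTop (nhds c) := by
  have hvisit : ∀ᵐ x ∂μ, ∃ n, T^[n] x ∈ Y := hio.mono fun _ h => h.nonempty
  have hgC := abs_indicator_one_le_one (X := X) Y
  filter_upwards [hT.quasiMeasurePreserving.ae
      (ae_tendsto_birkhoffAverage hT (measurable_one.indicator hY) hgC),
    hT.quasiMeasurePreserving.ae (ae_birkhoffLimsup_indicator_pos hT hY hvisit)] with x hlim hpos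
  refine ⟨_, hpos, hlim.congr fun n => ?_⟩
  rw [card_filter_Icc_iterate_mem_eq_birkhoffSum, birkhoffAverage, smul_eq_mul, div_eq_inv_mul]

/-- Burton–Easton: if a.e. point of a probability space visits `Y` infinitely
often under an invertible measure-preserving map `T`, then a.e. point visits
`Y` with a well-defined strictly positive frequency. -/
theorem positive_visit_frequency {X : Type*} [MeasurableSpace X]
    (μ : Measure X) [IsProbabilityMeasure μ] (T : X ≃ᵐ X)
    (hT : MeasurePreserving T μ μ) (Y : Set X) (hY : MeasurableSet Y)
    (hYpos : 0 < μ Y)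
    (hio : ∀ᵐ x ∂μ, {n : ℕ | T^[n] x ∈ Y}.Infinite) :
    ∀ᵐ x ∂μ, ∃ c : ℝ, 0 < c ∧
      Tendsto
        (fun n : ℕ =>
          (((Finset.Icc 1 n).filter fun k => T^[k] x ∈ Y).card : ℝ) / n)
        atTop (nhds c) :=
  positive_visit_frequency_general μ T hT Y hY hio
end
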